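/- arXiv:1412.2633 — 2 statements merged into one kernel-verified Lean document; each statement's English description precedes it below -/
import Mathlib

section
/- Let α > 0, m a nonnegative integer, and c > 1. Define I_m(t) = ∫_c^∞ (log λ)^{-α} λ^m e^{-λt} dλ. Then as t → 0+, I_m(t) = m! · t^{-1-m} |log t|^{-α} (1 + O(|log t|^{-1})). -/
/-!
Substituting `u = λ t` turns `I_m(t)` into `t^(-1-m) ∫₀^∞ w_t(u) u^m e^(-u) du`, where
`w_t(u) = (log (u / t))^(-α)` for `u > c t` and `w_t(u) = 0` otherwise, while
`m! = ∫₀^∞ u^m e^(-u) du`. With `L = |log t|` it therefore suffices to bound `|w_t(u) - L^(-α)|`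
by a constant times `L^(-α-1) (u + 2 u^(-1/2))`, which is integrable against `u^m e^(-u)`.
For `u > √t` we have `log (u / t) = L + log u ≥ L / 2`, so the mean value theorem for `x ↦ x^(-α)`
bounds the difference by `α 2^(α+1) L^(-α-1) |log u|`. For `u ≤ √t` both `w_t(u)` and `L^(-α)` lie
in `[0, (log c)^(-α)]`, and this constant is absorbed by `u^(-1/2) ≥ t^(-1/4)`, which dominates
every power of `L`.
-/

open MeasureTheory Real Set

lemma abs_rpow_neg_sub_rpow_neg_le {α x y : ℝ} (hα : 0 ≤ α) (hy : 0 < y) (hx : y / 2 ≤ x) :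
    |x ^ (-α) - y ^ (-α)| ≤ α * 2 ^ (α + 1) * y ^ (-α - 1) * |x - y| := by
  have hy2 : 0 < y / 2 := by positivity
  have hderiv :
      ∀ z ∈ Ici (y / 2), HasDerivWithinAt (· ^ (-α)) (-α * z ^ (-α - 1)) (Ici (y / 2)) z :=
    fun z hz => (hasDerivAt_rpow_const (Or.inl (hy2.trans_le hz).ne')).hasDerivWithinAt
  have hbound : ∀ z ∈ Ici (y / 2), ‖-α * z ^ (-α - 1)‖ ≤ α * (y / 2) ^ (-α - 1) := by
    intro z hz
    rw [norm_mul, norm_neg, norm_of_nonneg hα, norm_of_nonneg (rpow_nonneg (hy2.le.trans hz) _)]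
    exact mul_le_mul_of_nonneg_left (rpow_le_rpow_of_nonpos hy2 hz (by linarith)) hα
  have hhalf : (y / 2) ^ (-α - 1) = 2 ^ (α + 1) * y ^ (-α - 1) := by
    rw [div_rpow hy.le zero_le_two, show -α - 1 = -(α + 1) by ring, rpow_neg zero_le_two]
    field_simp
  have := (convex_Ici (y / 2)).norm_image_sub_le_of_norm_hasDerivWithin_le hderiv hbound
    (mem_Ici.mpr (half_le_self hy.le)) hx
  rw [hhalf] at this
  simpa [Real.norm_eq_abs, mul_assoc] using this

lemma abs_log_le_add_two_mul_rpow_neg_half {u : ℝ} (hu : 0 < u) :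
    |log u| ≤ u + 2 * u ^ (-(1 / 2) : ℝ) := by
  have hupper : log u ≤ u := by simpa using log_le_rpow_div hu.le one_pos
  have hlower : -log u ≤ 2 * u ^ (-(1 / 2) : ℝ) := by
    have := log_le_rpow_div (inv_nonneg.mpr hu.le) (one_half_pos (α := ℝ))
    rwa [log_inv, inv_rpow hu.le, ← rpow_neg hu.le, div_eq_mul_inv, mul_comm, inv_div,
      div_one] at this
  have : 0 ≤ u ^ (-(1 / 2) : ℝ) := rpow_nonneg hu.le _
  exact abs_le.mpr ⟨by linarith, by linarith⟩

lemma neg_log_rpow_le {t a ε : ℝ} (ht : 0 < t) (ht1 : t ≤ 1) (ha : 0 < a) (hε : 0 < ε) :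
    (-log t) ^ a ≤ (a / ε) ^ a * t ^ (-ε) := by
  have hlog : -log t ≤ a / ε * t ^ (-(ε / a)) := by
    have := log_le_rpow_div (inv_nonneg.mpr ht.le) (div_pos hε ha)
    rwa [log_inv, inv_rpow ht.le, ← rpow_neg ht.le, div_eq_mul_inv, mul_comm, inv_div] at this
  calc (-log t) ^ a ≤ (a / ε * t ^ (-(ε / a))) ^ a :=
        rpow_le_rpow (neg_nonneg.mpr (log_nonpos ht.le ht1)) hlog ha.le
    _ = (a / ε) ^ a * t ^ (-ε) := by
        rw [mul_rpow (by positivity) (rpow_nonneg ht.le _), ← rpow_mul ht.le]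
        congr 2
        field_simp

lemma abs_rpow_neg_log_div_sub_le_of_lt_sq {α t u : ℝ} (hα : 0 ≤ α) (ht : 0 < t) (ht1 : t < 1)
    (htu : t < u ^ 2) (hu : 0 < u) :
    |log (u / t) ^ (-α) - (-log t) ^ (-α)| ≤
      α * 2 ^ (α + 1) * (-log t) ^ (-α - 1) * (u + 2 * u ^ (-(1 / 2) : ℝ)) := by
  have hL : 0 < -log t := neg_pos.mpr (log_neg ht ht1)
  have hlog : log (u / t) - -log t = log u := by rw [log_div hu.ne' ht.ne']; ring
  have hhalf : -log t / 2 ≤ log (u / t) := by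
    have := log_lt_log ht htu
    rw [log_pow] at this
    push_cast at this
    linarith
  calc |log (u / t) ^ (-α) - (-log t) ^ (-α)|
      ≤ α * 2 ^ (α + 1) * (-log t) ^ (-α - 1) * |log u| := by
        simpa only [hlog] using abs_rpow_neg_sub_rpow_neg_le hα hL hhalf
    _ ≤ _ := by gcongr; exact abs_log_le_add_two_mul_rpow_neg_half hu

lemma abs_indicator_rpow_neg_log_div_sub_le_of_sq_le {α c t u : ℝ} (hα : 0 ≤ α) (hc : 1 < c)
    (ht : 0 < t) (htc : c ^ 2 * t ≤ 1) (hu : 0 < u) (hut : u ^ 2 ≤ t) :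
    |(Ioi (c * t)).indicator (fun u => log (u / t) ^ (-α)) u - (-log t) ^ (-α)| ≤
      log c ^ (-α) * (4 * (α + 1)) ^ (α + 1) * (-log t) ^ (-α - 1) * u ^ (-(1 / 2) : ℝ) := by
  have hlogc : 0 < log c := log_pos hc
  have ht1 : t < 1 := by nlinarith
  have hL : 0 < -log t := neg_pos.mpr (log_neg ht ht1)
  have hcL : log c ≤ -log t := by
    have := log_nonpos (by positivity) htc
    rw [log_mul (by positivity) ht.ne', log_pow] at this
    push_cast at this
    linarith
  have hweight :
      (Ioi (c * t)).indicator (fun u => log (u / t) ^ (-α)) u ∈ Icc 0 (log c ^ (-α)) := by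
    by_cases hcu : u ∈ Ioi (c * t)
    · have hcu' : c < u / t := (lt_div_iff₀ ht).mpr hcu
      have hlog : log c < log (u / t) := log_lt_log (by linarith) hcu'
      rw [indicator_of_mem hcu]
      exact ⟨rpow_nonneg (by linarith) _, rpow_le_rpow_of_nonpos hlogc hlog.le (by linarith)⟩
    · rw [indicator_of_notMem hcu]
      exact ⟨le_rfl, rpow_nonneg hlogc.le _⟩
  have hdiff : |(Ioi (c * t)).indicator (fun u => log (u / t) ^ (-α)) u - (-log t) ^ (-α)| ≤
      log c ^ (-α) := abs_sub_le_of_nonneg_of_le hweight.1 hweight.2 (rpow_nonneg hL.le _)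
        (rpow_le_rpow_of_nonpos hlogc hcL (by linarith))
  have hpow : (-log t) ^ (α + 1) ≤ (4 * (α + 1)) ^ (α + 1) * u ^ (-(1 / 2) : ℝ) := by
    calc (-log t) ^ (α + 1) ≤ ((α + 1) / (1 / 4)) ^ (α + 1) * t ^ (-(1 / 4) : ℝ) :=
          neg_log_rpow_le ht ht1.le (by linarith) (by norm_num)
      _ ≤ (4 * (α + 1)) ^ (α + 1) * u ^ (-(1 / 2) : ℝ) := by
          rw [div_div_eq_mul_div, div_one, mul_comm (α + 1) 4]
          gcongr
          calc t ^ (-(1 / 4) : ℝ) ≤ (u ^ 2) ^ (-(1 / 4) : ℝ) :=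
                rpow_le_rpow_of_nonpos (by positivity) hut (by norm_num)
            _ = u ^ (-(1 / 2) : ℝ) := by
                rw [← rpow_natCast, ← rpow_mul hu.le]; norm_num
  have hone : (-log t) ^ (α + 1) * (-log t) ^ (-α - 1) = 1 := by
    rw [← rpow_add hL]; norm_num
  calc _ ≤ log c ^ (-α) * ((-log t) ^ (α + 1) * (-log t) ^ (-α - 1)) := by
        rwa [hone, mul_one]
    _ ≤ log c ^ (-α) * ((4 * (α + 1)) ^ (α + 1) * u ^ (-(1 / 2) : ℝ) * (-log t) ^ (-α - 1)) := by
        gcongr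
    _ = _ := by ring

lemma abs_indicator_rpow_neg_log_div_sub_le {α c t u : ℝ} (hα : 0 ≤ α) (hc : 1 < c)
    (ht : 0 < t) (htc : c ^ 2 * t ≤ 1) (hu : 0 < u) :
    |(Ioi (c * t)).indicator (fun u => log (u / t) ^ (-α)) u - (-log t) ^ (-α)| ≤
      (α * 2 ^ (α + 1) + log c ^ (-α) * (4 * (α + 1)) ^ (α + 1)) * (-log t) ^ (-α - 1) *
        (u + 2 * u ^ (-(1 / 2) : ℝ)) := by
  have hlogc : 0 < log c := log_pos hc
  have ht1 : t < 1 := by nlinarith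
  have hL : 0 < -log t := neg_pos.mpr (log_neg ht ht1)
  rw [add_mul, add_mul]
  rcases le_or_gt (u ^ 2) t with hut | htu
  · refine le_add_of_nonneg_of_le (by positivity) ?_
    calc _ ≤ log c ^ (-α) * (4 * (α + 1)) ^ (α + 1) * (-log t) ^ (-α - 1) * u ^ (-(1 / 2) : ℝ) :=
          abs_indicator_rpow_neg_log_div_sub_le_of_sq_le hα hc ht htc hu hut
      _ ≤ _ := by gcongr; linarith [rpow_nonneg hu.le (-(1 / 2) : ℝ)]
  · have hcu : u ∈ Ioi (c * t) := by
      have : (c * t) ^ 2 < u ^ 2 := by nlinarith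
      exact (pow_lt_pow_iff_left₀ (by positivity) hu.le two_ne_zero).mp this
    rw [indicator_of_mem hcu]
    exact le_add_of_le_of_nonneg (abs_rpow_neg_log_div_sub_le_of_lt_sq hα ht ht1 htu hu)
      (by positivity)

lemma abs_integral_mul_sub_const_mul_integral_le {X : Type*} [MeasurableSpace X] {μ : Measure X}
    {w f g : X → ℝ} {a : ℝ} (hf : Integrable f μ) (hgf : Integrable (fun x => g x * f x) μ)
    (hw : AEStronglyMeasurable w μ) (hf0 : ∀ᵐ x ∂μ, 0 ≤ f x) (hwg : ∀ᵐ x ∂μ, |w x - a| ≤ g x) :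
    |∫ x, w x * f x ∂μ - a * ∫ x, f x ∂μ| ≤ ∫ x, g x * f x ∂μ := by
  have hbound : ∀ᵐ x ∂μ, ‖(w x - a) * f x‖ ≤ g x * f x := by
    filter_upwards [hf0, hwg] with x hfx hwx
    rw [norm_mul, norm_of_nonneg hfx]
    exact mul_le_mul_of_nonneg_right hwx hfx
  have hdev : Integrable (fun x => (w x - a) * f x) μ :=
    hgf.mono' ((hw.sub aestronglyMeasurable_const).mul hf.aestronglyMeasurable) hbound
  have hwf : Integrable (fun x => w x * f x) μ :=
    (hdev.add (hf.const_mul a)).congr (ae_of_all _ fun x => by simp only [Pi.add_apply]; ring)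
  have hsplit : ∫ x, w x * f x ∂μ - a * ∫ x, f x ∂μ = ∫ x, (w x - a) * f x ∂μ := by
    rw [← integral_const_mul, ← integral_sub hwf (hf.const_mul a)]
    congr 1; funext x; ring
  rw [hsplit, ← Real.norm_eq_abs]
  exact norm_integral_le_of_norm_le hgf hbound

lemma setIntegral_Ioi_mul_pow_mul_exp_neg_mul {c t : ℝ} (hc : 0 ≤ c) (ht : 0 < t) (g : ℝ → ℝ)
    (m : ℕ) :
    ∫ l in Ioi c, g l * l ^ m * exp (-(l * t)) =
      t ^ (-1 - (m : ℝ)) *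
        ∫ u in Ioi 0, (Ioi (c * t)).indicator (fun u => g (u / t)) u * (u ^ m * exp (-u)) := by
  have hscale : ∀ l, g l * l ^ m * exp (-(l * t)) =
      (t ^ m)⁻¹ * (g (l * t / t) * ((l * t) ^ m * exp (-(l * t)))) := by
    intro l
    rw [mul_div_cancel_right₀ l ht.ne', mul_pow]
    field_simp
  have hpow : t ^ (-1 - (m : ℝ)) = t⁻¹ * (t ^ m)⁻¹ := by
    rw [sub_eq_add_neg, rpow_add ht, rpow_neg_one, rpow_neg ht.le, rpow_natCast]
  have hcut : Ioi 0 ∩ Ioi (c * t) = Ioi (c * t) := by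
    rw [Ioi_inter_Ioi, max_eq_right (by positivity)]
  have hind : ∀ u, (Ioi (c * t)).indicator (fun u => g (u / t)) u * (u ^ m * exp (-u)) =
      (Ioi (c * t)).indicator (fun u => g (u / t) * (u ^ m * exp (-u))) u :=
    fun u => (indicator_mul_left (Ioi (c * t)) (fun u => g (u / t))
      (fun u => u ^ m * exp (-u))).symm
  simp_rw [hscale, hind]
  rw [integral_comp_mul_right_Ioi (fun u => (t ^ m)⁻¹ * (g (u / t) * (u ^ m * exp (-u)))) c ht,
    setIntegral_indicator measurableSet_Ioi, hcut, integral_const_mul, smul_eq_mul, hpow, mul_assoc]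

lemma integral_pow_mul_exp_neg_Ioi (m : ℕ) : ∫ u in Ioi 0, u ^ m * exp (-u) = m.factorial := by
  rw [← Gamma_nat_eq_factorial, Gamma_eq_integral (by positivity)]
  simp [mul_comm]

lemma integrableOn_rpow_mul_exp_neg_Ioi {p : ℝ} (hp : -1 < p) :
    IntegrableOn (fun u => u ^ p * exp (-u)) (Ioi 0) := by
  simpa [mul_comm] using GammaIntegral_convergent (s := p + 1) (by linarith)

lemma integrableOn_pow_mul_exp_neg_Ioi (m : ℕ) :
    IntegrableOn (fun u => u ^ m * exp (-u)) (Ioi 0) := by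
  simpa using integrableOn_rpow_mul_exp_neg_Ioi (p := m) (by linarith [m.cast_nonneg (α := ℝ)])

lemma integrableOn_add_two_mul_rpow_neg_half_mul_pow_mul_exp_neg_Ioi (m : ℕ) :
    IntegrableOn (fun u => (u + 2 * u ^ (-(1 / 2) : ℝ)) * (u ^ m * exp (-u))) (Ioi 0) := by
  have hm : (0 : ℝ) ≤ m := m.cast_nonneg
  refine ((integrableOn_rpow_mul_exp_neg_Ioi (p := m + 1) (by linarith)).add
    ((integrableOn_rpow_mul_exp_neg_Ioi (p := m - 1 / 2) (by linarith)).const_mul 2)).congr_fun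
    (fun u (hu : 0 < u) => ?_) measurableSet_Ioi
  simp only [Pi.add_apply]
  rw [rpow_add hu, rpow_sub hu, rpow_one, rpow_natCast, rpow_neg hu.le]
  ring

lemma abs_integral_indicator_rpow_neg_log_div_mul_sub_le {α c t : ℝ} (hα : 0 ≤ α) (hc : 1 < c)
    (ht : 0 < t) (htc : c ^ 2 * t ≤ 1) (m : ℕ) :
    |(∫ u in Ioi 0, (Ioi (c * t)).indicator (fun u => log (u / t) ^ (-α)) u * (u ^ m * exp (-u))) -
        (-log t) ^ (-α) * m.factorial| ≤
      (α * 2 ^ (α + 1) + log c ^ (-α) * (4 * (α + 1)) ^ (α + 1)) * (-log t) ^ (-α - 1) *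
        ∫ u in Ioi 0, (u + 2 * u ^ (-(1 / 2) : ℝ)) * (u ^ m * exp (-u)) := by
  set K := (α * 2 ^ (α + 1) + log c ^ (-α) * (4 * (α + 1)) ^ (α + 1)) * (-log t) ^ (-α - 1)
  have hmajorant : K * ∫ u in Ioi 0, (u + 2 * u ^ (-(1 / 2) : ℝ)) * (u ^ m * exp (-u)) =
      ∫ u in Ioi 0, K * (u + 2 * u ^ (-(1 / 2) : ℝ)) * (u ^ m * exp (-u)) := by
    rw [← integral_const_mul]
    congr 1 with u
    ring
  rw [← integral_pow_mul_exp_neg_Ioi m, hmajorant]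
  refine abs_integral_mul_sub_const_mul_integral_le (integrableOn_pow_mul_exp_neg_Ioi m) ?_
    ((Measurable.indicator (by fun_prop) measurableSet_Ioi).aestronglyMeasurable)
    (ae_restrict_of_forall_mem measurableSet_Ioi fun u hu =>
      mul_nonneg (pow_nonneg (le_of_lt hu) m) (exp_pos _).le)
    (ae_restrict_of_forall_mem measurableSet_Ioi fun u hu =>
      abs_indicator_rpow_neg_log_div_sub_le hα hc ht htc hu)
  simpa only [mul_assoc] using
    (integrableOn_add_two_mul_rpow_neg_half_mul_pow_mul_exp_neg_Ioi m).const_mul K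

theorem laplace_log_asymp_zero (α : ℝ) (hα : 0 < α) (m : ℕ) (c : ℝ) (hc : 1 < c) :
    ∃ C δ : ℝ, 0 < δ ∧ ∀ t : ℝ, 0 < t → t ≤ δ →
      |(∫ l in Set.Ioi c, (Real.log l) ^ (-α) * l ^ m * Real.exp (-(l * t))) -
          (m.factorial : ℝ) * t ^ (-1 - (m : ℝ)) * |Real.log t| ^ (-α)| ≤
        C * t ^ (-1 - (m : ℝ)) * |Real.log t| ^ (-α - 1) := by
  set K := α * 2 ^ (α + 1) + log c ^ (-α) * (4 * (α + 1)) ^ (α + 1)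
  set M := ∫ u in Ioi 0, (u + 2 * u ^ (-(1 / 2) : ℝ)) * (u ^ m * exp (-u))
  refine ⟨K * M, (c ^ 2)⁻¹, by positivity, fun t ht htδ => ?_⟩
  have htc : c ^ 2 * t ≤ 1 := by
    calc c ^ 2 * t ≤ c ^ 2 * (c ^ 2)⁻¹ := by gcongr
      _ = 1 := mul_inv_cancel₀ (by positivity)
  have htm : 0 < t ^ (-1 - (m : ℝ)) := rpow_pos_of_pos ht _
  rw [abs_of_neg (log_neg ht (by nlinarith)),
    setIntegral_Ioi_mul_pow_mul_exp_neg_mul (by linarith) ht]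
  set J := ∫ u in Ioi 0, (Ioi (c * t)).indicator (fun u => log (u / t) ^ (-α)) u *
    (u ^ m * exp (-u))
  calc |t ^ (-1 - (m : ℝ)) * J - m.factorial * t ^ (-1 - (m : ℝ)) * (-log t) ^ (-α)|
      = |t ^ (-1 - (m : ℝ)) * (J - (-log t) ^ (-α) * m.factorial)| := by ring_nf
    _ = t ^ (-1 - (m : ℝ)) * |J - (-log t) ^ (-α) * m.factorial| := by
        rw [abs_mul, abs_of_pos htm]
    _ ≤ t ^ (-1 - (m : ℝ)) * (K * (-log t) ^ (-α - 1) * M) := by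
        gcongr
        exact abs_integral_indicator_rpow_neg_log_div_mul_sub_le hα.le hc ht htc m
    _ = K * M * t ^ (-1 - (m : ℝ)) * (-log t) ^ (-α - 1) := by ring
end

section
/- Let A and B be compact self-adjoint operators on a Hilbert space, and α > 0. Suppose λ_n^±(A) = C^± n^{-α} + o(n^{-α}) as n → ∞ for both signs, and s_n(B) = o(n^{-α}) as n → ∞. Then λ_n^±(A+B) = C^± n^{-α} + o(n^{-α}) as n → ∞. -/
variable {H : Type*} [NormedAddCommGroup H] [InnerProductSpace ℂ H] [CompleteSpace H]

/-- Courant–Fischer min–max value: the `n`-th (0-based) positive eigenvalue of a compact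
self-adjoint operator, padded with zeros. -/
noncomputable def lambdaPos (A : H →L[ℂ] H) (n : ℕ) : ℝ :=
  ⨅ V : {V : Submodule ℂ H // Module.finrank ℂ V = n},
    ⨆ x : {x : H // x ∈ (V : Submodule ℂ H)ᗮ ∧ ‖x‖ = 1},
      (inner ℂ (A (x : H)) (x : H) : ℂ).re

/-- The `n`-th (0-based) singular value of a bounded operator. -/
noncomputable def sVal (B : H →L[ℂ] H) (n : ℕ) : ℝ :=
  Real.sqrt (lambdaPos ((ContinuousLinearMap.adjoint B).comp B) n)

/-- Counting function of positive eigenvalues exceeding `ε`. -/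
noncomputable def posCount (A : H →L[ℂ] H) (ε : ℝ) : ℕ :=
  Nat.card {n : ℕ | ε < lambdaPos A n}


/-!
Weyl's inequality `λ_{n+m}(A + B) ≤ λ_n(A) + λ_m(B)` for the min–max values, together with
`λ_m(±B) ≤ s_m(B)`, traps `λ_n(A + B)` between `λ_{n+m}(A) - s_m(B)` and `λ_{n-m}(A) + s_m(B)`.
With `m = ⌊δ n⌋`, the rescaled sequences `n ^ α λ_{n ± m}(A)` tend to `(1 ± δ) ^ (-α) C` while
`n ^ α s_m(B) → 0`; letting `δ → 0` gives `n ^ α λ_n(A + B) → C`. Replacing `A, B` by `-A, -B`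
gives the negative eigenvalues. In finite dimension all sequences vanish eventually.
-/

open Module Submodule Filter Topology Asymptotics

theorem Submodule.exists_le_finrank_eq_of_not_finite {K V : Type*} [DivisionRing K]
    [AddCommGroup V] [Module K V] (hV : ¬ Module.Finite K V) (p : Submodule K V)
    [Module.Finite K p] {k : ℕ} (hk : finrank K p ≤ k) :
    ∃ q : Submodule K V, p ≤ q ∧ Module.Finite K q ∧ finrank K q = k := by
  induction k, hk using Nat.le_induction with
  | base => exact ⟨p, le_rfl, inferInstance, rfl⟩
  | succ k _ ih =>
    obtain ⟨q, hpq, hq, rfl⟩ := ih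
    obtain ⟨v, hv⟩ : ∃ v, v ∉ q := by
      by_contra! h
      obtain rfl := eq_top_iff'.mpr h
      exact hV (Module.Finite.equiv topEquiv)
    refine ⟨q ⊔ K ∙ v, hpq.trans le_sup_left, inferInstance, ?_⟩
    have h := finrank_sup_add_finrank_inf_eq q (K ∙ v)
    rwa [(disjoint_span_singleton_of_notMem hv).eq_bot, finrank_bot, add_zero,
      finrank_span_singleton (ne_of_mem_of_not_mem q.zero_mem hv).symm] at h

theorem Submodule.exists_norm_eq_one_mem_orthogonal {𝕜 E : Type*} [RCLike 𝕜]
    [NormedAddCommGroup E] [InnerProductSpace 𝕜 E] (hE : ¬ FiniteDimensional 𝕜 E)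
    (U : Submodule 𝕜 E) [FiniteDimensional 𝕜 U] : ∃ x ∈ Uᗮ, ‖x‖ = 1 := by
  have hU : U ≠ ⊤ := by
    rintro rfl
    exact hE (Module.Finite.equiv topEquiv)
  obtain ⟨y, hyU, hy⟩ := exists_mem_ne_zero_of_ne_bot (mt orthogonal_eq_bot_iff.mp hU)
  exact ⟨(‖y‖⁻¹ : 𝕜) • y, Uᗮ.smul_mem _ hyU, norm_smul_inv_norm hy⟩

section Rayleigh

variable {E : Type*} [NormedAddCommGroup E] [InnerProductSpace ℂ E]

noncomputable def rayleighSupOrth (T : E →L[ℂ] E) (V : Submodule ℂ E) : ℝ :=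
  ⨆ x : {x : E // x ∈ Vᗮ ∧ ‖x‖ = 1}, (inner ℂ (T (x : E)) (x : E)).re

theorem abs_re_inner_apply_le_opNorm (T : E →L[ℂ] E) {x : E} (hx : ‖x‖ = 1) :
    |(inner ℂ (T x) x).re| ≤ ‖T‖ :=
  calc |(inner ℂ (T x) x).re| ≤ ‖T x‖ * ‖x‖ :=
        (Complex.abs_re_le_norm _).trans (norm_inner_le_norm _ _)
    _ ≤ ‖T‖ := by simpa [hx] using T.le_opNorm x

theorem bddAbove_re_inner_orthogonal (T : E →L[ℂ] E) (V : Submodule ℂ E) :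
    BddAbove (Set.range fun x : {x : E // x ∈ Vᗮ ∧ ‖x‖ = 1} => (inner ℂ (T (x : E)) (x : E)).re) :=
  ⟨‖T‖, by
    rintro _ ⟨x, rfl⟩
    exact (abs_le.mp (abs_re_inner_apply_le_opNorm T x.2.2)).2⟩

theorem re_inner_le_rayleighSupOrth (T : E →L[ℂ] E) {V : Submodule ℂ E} {x : E} (hxV : x ∈ Vᗮ)
    (hx : ‖x‖ = 1) : (inner ℂ (T x) x).re ≤ rayleighSupOrth T V :=
  le_ciSup (bddAbove_re_inner_orthogonal T V) ⟨x, hxV, hx⟩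

theorem neg_opNorm_le_rayleighSupOrth (T : E →L[ℂ] E) (V : Submodule ℂ E) :
    -‖T‖ ≤ rayleighSupOrth T V := by
  rcases isEmpty_or_nonempty {x : E // x ∈ Vᗮ ∧ ‖x‖ = 1} with h | ⟨x, hxV, hx⟩
  · simp [rayleighSupOrth, Real.iSup_of_isEmpty]
  · exact (neg_le_of_abs_le (abs_re_inner_apply_le_opNorm T hx)).trans
      (re_inner_le_rayleighSupOrth T hxV hx)

theorem lambdaPos_eq_iInf (T : E →L[ℂ] E) (n : ℕ) :
    lambdaPos T n = ⨅ V : {V : Submodule ℂ E // finrank ℂ V = n}, rayleighSupOrth T V :=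
  rfl

theorem lambdaPos_le_rayleighSupOrth (T : E →L[ℂ] E) (V : Submodule ℂ E) :
    lambdaPos T (finrank ℂ V) ≤ rayleighSupOrth T V := by
  rw [lambdaPos_eq_iInf]
  refine ciInf_le ⟨-‖T‖, ?_⟩ (⟨V, rfl⟩ : {W : Submodule ℂ E // finrank ℂ W = finrank ℂ V})
  rintro _ ⟨W, rfl⟩
  exact neg_opNorm_le_rayleighSupOrth T W

theorem rayleighSupOrth_add_le {A B : E →L[ℂ] E} {U V W : Submodule ℂ E}
    (hU : ∃ x ∈ Uᗮ, ‖x‖ = 1) (hVU : V ≤ U) (hWU : W ≤ U) :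
    rayleighSupOrth (A + B) U ≤ rayleighSupOrth A V + rayleighSupOrth B W := by
  obtain ⟨x₀, hx₀U, hx₀⟩ := hU
  have : Nonempty {x : E // x ∈ Uᗮ ∧ ‖x‖ = 1} := ⟨⟨x₀, hx₀U, hx₀⟩⟩
  refine ciSup_le fun ⟨x, hxU, hx⟩ => ?_
  rw [add_apply, inner_add_left, Complex.add_re]
  exact add_le_add (re_inner_le_rayleighSupOrth A (orthogonal_le hVU hxU) hx)
    (re_inner_le_rayleighSupOrth B (orthogonal_le hWU hxU) hx)

/-- Positive indices are essential: infinite-dimensional subspaces also have `finrank = 0`, so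
they take part in the infimum defining `lambdaPos _ 0`. -/
theorem lambdaPos_add_le (hE : ¬ FiniteDimensional ℂ E) (A B : E →L[ℂ] E) {n m : ℕ}
    (hn : 1 ≤ n) (hm : 1 ≤ m) : lambdaPos (A + B) (n + m) ≤ lambdaPos A n + lambdaPos B m := by
  have hne (k : ℕ) : Nonempty {V : Submodule ℂ E // finrank ℂ V = k} := by
    obtain ⟨V, -, -, hV⟩ := exists_le_finrank_eq_of_not_finite hE ⊥ (k := k) (by simp)
    exact ⟨⟨V, hV⟩⟩
  rw [lambdaPos_eq_iInf A, lambdaPos_eq_iInf B]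
  refine le_ciInf_add_ciInf fun ⟨V, hV⟩ ⟨W, hW⟩ => ?_
  have : FiniteDimensional ℂ V := Module.finite_of_finrank_pos (hV ▸ hn)
  have : FiniteDimensional ℂ W := Module.finite_of_finrank_pos (hW ▸ hm)
  obtain ⟨U, hVWU, hUfin, hU⟩ := exists_le_finrank_eq_of_not_finite hE (V ⊔ W)
    ((finrank_add_le_finrank_add_finrank V W).trans_eq (by rw [hV, hW]))
  calc lambdaPos (A + B) (n + m) = lambdaPos (A + B) (finrank ℂ U) := by rw [hU]
    _ ≤ rayleighSupOrth (A + B) U := lambdaPos_le_rayleighSupOrth _ U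
    _ ≤ rayleighSupOrth A V + rayleighSupOrth B W :=
      rayleighSupOrth_add_le (exists_norm_eq_one_mem_orthogonal hE U)
        (le_sup_left.trans hVWU) (le_sup_right.trans hVWU)

theorem rayleighSupOrth_top (T : E →L[ℂ] E) : rayleighSupOrth T ⊤ = 0 := by
  have : IsEmpty {x : E // x ∈ (⊤ : Submodule ℂ E)ᗮ ∧ ‖x‖ = 1} :=
    ⟨fun ⟨x, hx, hx1⟩ => by simp_all⟩
  exact Real.iSup_of_isEmpty _

theorem lambdaPos_eq_zero_of_finrank_le [FiniteDimensional ℂ E] (T : E →L[ℂ] E) {n : ℕ}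
    (hn : finrank ℂ E ≤ n) : lambdaPos T n = 0 := by
  rw [lambdaPos_eq_iInf]
  rcases isEmpty_or_nonempty {V : Submodule ℂ E // finrank ℂ V = n} with h | h
  · exact Real.iInf_of_isEmpty _
  have hV (V : {V : Submodule ℂ E // finrank ℂ V = n}) : rayleighSupOrth T V = 0 := by
    rw [eq_top_of_finrank_eq (le_antisymm (finrank_le _) (hn.trans V.2.ge)), rayleighSupOrth_top]
  simp [hV]

end Rayleigh

theorem rayleighSupOrth_le_sqrt_adjoint_comp (T : H →L[ℂ] H) (V : Submodule ℂ H) :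
    rayleighSupOrth T V ≤ √(rayleighSupOrth (ContinuousLinearMap.adjoint T ∘L T) V) := by
  refine Real.iSup_le (fun ⟨x, hxV, hx⟩ => ?_) (Real.sqrt_nonneg _)
  calc (inner ℂ (T x) x).re ≤ ‖T x‖ * ‖x‖ := (Complex.re_le_norm _).trans (norm_inner_le_norm _ _)
    _ = √(inner ℂ ((ContinuousLinearMap.adjoint T ∘L T) x) x).re := by
      rw [hx, mul_one, T.apply_norm_eq_sqrt_inner_adjoint_left]; rfl
    _ ≤ _ := Real.sqrt_le_sqrt (re_inner_le_rayleighSupOrth _ hxV hx)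

theorem lambdaPos_le_sVal (T : H →L[ℂ] H) (n : ℕ) : lambdaPos T n ≤ sVal T n := by
  rcases isEmpty_or_nonempty {V : Submodule ℂ H // finrank ℂ V = n} with h | h
  · simp [sVal, lambdaPos_eq_iInf, Real.iInf_of_isEmpty]
  rcases le_or_gt (lambdaPos T n) 0 with hT | hT
  · exact hT.trans (Real.sqrt_nonneg _)
  rw [sVal, Real.le_sqrt' hT, lambdaPos_eq_iInf (ContinuousLinearMap.adjoint T ∘L T)]
  refine le_ciInf ?_
  rintro ⟨V, rfl⟩
  rw [← Real.le_sqrt' hT]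
  exact (lambdaPos_le_rayleighSupOrth T V).trans (rayleighSupOrth_le_sqrt_adjoint_comp T V)

theorem sVal_neg (B : H →L[ℂ] H) (n : ℕ) : sVal (-B) n = sVal B n := by
  rw [sVal, sVal, map_neg, ContinuousLinearMap.neg_comp, ContinuousLinearMap.comp_neg, neg_neg]

theorem isLittleO_rpow_neg_iff_tendsto {a : ℕ → ℝ} {α C : ℝ} :
    ((fun n : ℕ => a n - C * (n : ℝ) ^ (-α)) =o[atTop] fun n : ℕ => (n : ℝ) ^ (-α)) ↔
      Tendsto (fun n : ℕ => (n : ℝ) ^ α * a n) atTop (𝓝 C) := by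
  have hpos : ∀ᶠ n : ℕ in atTop, (0 : ℝ) < (n : ℝ) ^ (-α) := by
    filter_upwards [eventually_gt_atTop 0] with n hn
    positivity
  rw [isLittleO_iff_tendsto' (hpos.mono fun n hn h => absurd h hn.ne'),
    ← tendsto_sub_nhds_zero_iff (x := C)]
  refine tendsto_congr' ?_
  filter_upwards [hpos] with n hn
  rw [sub_div, mul_div_cancel_right₀ _ hn.ne', Real.rpow_neg (Nat.cast_nonneg n), div_inv_eq_mul,
    mul_comm]

theorem tendsto_rpow_mul_comp_of_tendsto_div {α C t : ℝ} (ht : 0 < t) {a : ℕ → ℝ} {φ : ℕ → ℕ}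
    (ha : Tendsto (fun n : ℕ => (n : ℝ) ^ α * a n) atTop (𝓝 C))
    (hφ : Tendsto (fun n : ℕ => (φ n : ℝ) / n) atTop (𝓝 t)) :
    Tendsto (fun n : ℕ => (n : ℝ) ^ α * a (φ n)) atTop (𝓝 (t ^ (-α) * C)) := by
  have hφ_top : Tendsto φ atTop atTop := by
    rw [← tendsto_natCast_atTop_iff (R := ℝ)]
    refine (hφ.pos_mul_atTop ht tendsto_natCast_atTop_atTop).congr' ?_
    filter_upwards [eventually_ne_atTop 0] with n hn
    field_simp
  refine ((hφ.rpow_const (Or.inl ht.ne')).mul (ha.comp hφ_top)).congr' ?_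
  filter_upwards [eventually_ne_atTop 0, hφ_top.eventually_ne_atTop 0] with n hn hφn
  have hn' : (0 : ℝ) < n := by positivity
  have hφn' : (0 : ℝ) < φ n := by positivity
  simp only [Function.comp_apply]
  rw [Real.div_rpow hφn'.le hn'.le, Real.rpow_neg hφn'.le, Real.rpow_neg hn'.le]
  have : (φ n : ℝ) ^ α ≠ 0 := by positivity
  field_simp

theorem tendsto_floor_mul_div {δ : ℝ} (hδ : 0 ≤ δ) :
    Tendsto (fun n : ℕ => (⌊δ * n⌋₊ : ℝ) / n) atTop (𝓝 δ) :=
  (tendsto_nat_floor_mul_div_atTop hδ).comp tendsto_natCast_atTop_atTop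

theorem tendsto_add_floor_mul_div {δ : ℝ} (hδ : 0 ≤ δ) :
    Tendsto (fun n : ℕ => ((n + ⌊δ * n⌋₊ : ℕ) : ℝ) / n) atTop (𝓝 (1 + δ)) := by
  refine (tendsto_const_nhds.add (tendsto_floor_mul_div hδ)).congr' ?_
  filter_upwards [eventually_ne_atTop 0] with n hn
  push_cast
  field_simp

theorem tendsto_sub_floor_mul_div {δ : ℝ} (hδ₀ : 0 ≤ δ) (hδ₁ : δ ≤ 1) :
    Tendsto (fun n : ℕ => ((n - ⌊δ * n⌋₊ : ℕ) : ℝ) / n) atTop (𝓝 (1 - δ)) := by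
  refine (tendsto_const_nhds.sub (tendsto_floor_mul_div hδ₀)).congr' ?_
  filter_upwards [eventually_ne_atTop 0] with n hn
  have : ⌊δ * n⌋₊ ≤ n := Nat.floor_le_of_le (by nlinarith [(Nat.cast_nonneg n : (0 : ℝ) ≤ n)])
  rw [Nat.cast_sub this]
  field_simp

section WeylBounds

variable {α C c : ℝ} {a b s : ℕ → ℝ}

theorem eventually_rpow_mul_lt_of_le_sub_add
    (ha : Tendsto (fun n : ℕ => (n : ℝ) ^ α * a n) atTop (𝓝 C))
    (hs : Tendsto (fun n : ℕ => (n : ℝ) ^ α * s n) atTop (𝓝 0))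
    (hb : ∀ n m, 1 ≤ m → m < n → b n ≤ a (n - m) + s m) (hc : C < c) :
    ∀ᶠ n : ℕ in atTop, (n : ℝ) ^ α * b n < c := by
  obtain ⟨δ, hcδ, hδ₀, hδ₁⟩ : ∃ δ, (1 - δ) ^ (-α) * C < c ∧ δ ∈ Set.Ioo (0 : ℝ) 1 := by
    have hcont : ContinuousAt (fun δ : ℝ => (1 - δ) ^ (-α) * C) 0 :=
      ((continuousAt_const.sub continuousAt_id).rpow_const (Or.inl (by norm_num))).mul
        continuousAt_const
    have hev := hcont.eventually (gt_mem_nhds (by simpa using hc))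
    exact ((hev.filter_mono nhdsWithin_le_nhds).and (Ioo_mem_nhdsGT zero_lt_one)).exists
  have hU := (tendsto_rpow_mul_comp_of_tendsto_div (by linarith) ha
    (tendsto_sub_floor_mul_div hδ₀.le hδ₁.le)).add
    (tendsto_rpow_mul_comp_of_tendsto_div hδ₀ hs (tendsto_floor_mul_div hδ₀.le))
  rw [mul_zero, add_zero] at hU
  filter_upwards [hU.eventually (gt_mem_nhds hcδ), eventually_gt_atTop 0,
    (tendsto_natCast_atTop_atTop.const_mul_atTop hδ₀).eventually_ge_atTop 1] with n hn hn₀ hδn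
  refine lt_of_le_of_lt ?_ hn
  rw [← mul_add]
  refine mul_le_mul_of_nonneg_left (hb n _ (Nat.le_floor (by simpa using hδn)) ?_) (by positivity)
  have : (0 : ℝ) < n := by positivity
  exact (Nat.floor_lt (by positivity)).mpr (by nlinarith)

theorem eventually_lt_rpow_mul_of_add_sub_le
    (ha : Tendsto (fun n : ℕ => (n : ℝ) ^ α * a n) atTop (𝓝 C))
    (hs : Tendsto (fun n : ℕ => (n : ℝ) ^ α * s n) atTop (𝓝 0))
    (hb : ∀ n m, 1 ≤ n → 1 ≤ m → a (n + m) - s m ≤ b n) (hc : c < C) :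
    ∀ᶠ n : ℕ in atTop, c < (n : ℝ) ^ α * b n := by
  obtain ⟨δ, hcδ, hδ₀, -⟩ : ∃ δ, c < (1 + δ) ^ (-α) * C ∧ δ ∈ Set.Ioo (0 : ℝ) 1 := by
    have hcont : ContinuousAt (fun δ : ℝ => (1 + δ) ^ (-α) * C) 0 :=
      ((continuousAt_const.add continuousAt_id).rpow_const (Or.inl (by norm_num))).mul
        continuousAt_const
    have hev := hcont.eventually (lt_mem_nhds (by simpa using hc))
    exact ((hev.filter_mono nhdsWithin_le_nhds).and (Ioo_mem_nhdsGT zero_lt_one)).exists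
  have hL := (tendsto_rpow_mul_comp_of_tendsto_div (by linarith) ha
    (tendsto_add_floor_mul_div hδ₀.le)).sub
    (tendsto_rpow_mul_comp_of_tendsto_div hδ₀ hs (tendsto_floor_mul_div hδ₀.le))
  rw [mul_zero, sub_zero] at hL
  filter_upwards [hL.eventually (lt_mem_nhds hcδ), eventually_ge_atTop 1,
    (tendsto_natCast_atTop_atTop.const_mul_atTop hδ₀).eventually_ge_atTop 1] with n hn hn₁ hδn
  refine hn.trans_le ?_
  rw [← mul_sub]
  exact mul_le_mul_of_nonneg_left (hb n _ hn₁ (Nat.le_floor (by simpa using hδn))) (by positivity)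

theorem tendsto_rpow_mul_of_weyl_bounds
    (ha : Tendsto (fun n : ℕ => (n : ℝ) ^ α * a n) atTop (𝓝 C))
    (hs : Tendsto (fun n : ℕ => (n : ℝ) ^ α * s n) atTop (𝓝 0))
    (hup : ∀ n m, 1 ≤ m → m < n → b n ≤ a (n - m) + s m)
    (hlow : ∀ n m, 1 ≤ n → 1 ≤ m → a (n + m) - s m ≤ b n) :
    Tendsto (fun n : ℕ => (n : ℝ) ^ α * b n) atTop (𝓝 C) :=
  tendsto_order.2 ⟨fun _ hc => eventually_lt_rpow_mul_of_add_sub_le ha hs hlow hc,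
    fun _ hc => eventually_rpow_mul_lt_of_le_sub_add ha hs hup hc⟩

end WeylBounds

theorem lambdaPos_add_le_sub_add (hH : ¬ FiniteDimensional ℂ H) (A B : H →L[ℂ] H) {n m : ℕ}
    (hm : 1 ≤ m) (hmn : m < n) : lambdaPos (A + B) n ≤ lambdaPos A (n - m) + sVal B m := by
  have h := lambdaPos_add_le hH A B (n := n - m) (by omega) hm
  rw [Nat.sub_add_cancel hmn.le] at h
  linarith [lambdaPos_le_sVal B m]

theorem lambdaPos_add_sub_le (hH : ¬ FiniteDimensional ℂ H) (A B : H →L[ℂ] H) {n m : ℕ}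
    (hn : 1 ≤ n) (hm : 1 ≤ m) : lambdaPos A (n + m) - sVal B m ≤ lambdaPos (A + B) n := by
  have h := lambdaPos_add_le hH (A + B) (-B) hn hm
  rw [add_neg_cancel_right] at h
  linarith [lambdaPos_le_sVal (-B) m, sVal_neg B m]

theorem isLittleO_lambdaPos_add {α C : ℝ} {A B : H →L[ℂ] H}
    (hA : (fun n : ℕ => lambdaPos A n - C * (n : ℝ) ^ (-α)) =o[atTop]
      fun n : ℕ => (n : ℝ) ^ (-α))
    (hB : (fun n : ℕ => sVal B n) =o[atTop] fun n : ℕ => (n : ℝ) ^ (-α)) :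
    (fun n : ℕ => lambdaPos (A + B) n - C * (n : ℝ) ^ (-α)) =o[atTop]
      fun n : ℕ => (n : ℝ) ^ (-α) := by
  by_cases hH : FiniteDimensional ℂ H
  · refine hA.congr' ?_ EventuallyEq.rfl
    filter_upwards [eventually_ge_atTop (finrank ℂ H)] with n hn
    rw [lambdaPos_eq_zero_of_finrank_le A hn, lambdaPos_eq_zero_of_finrank_le (A + B) hn]
  exact isLittleO_rpow_neg_iff_tendsto.mpr <| tendsto_rpow_mul_of_weyl_bounds
    (isLittleO_rpow_neg_iff_tendsto.mp hA)
    (isLittleO_rpow_neg_iff_tendsto (C := 0).mp (by simpa using hB))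
    (fun _ _ => lambdaPos_add_le_sub_add hH A B) (fun _ _ => lambdaPos_add_sub_le hH A B)

open Asymptotics Filter

theorem eigenvalue_asymptotics_stability_general (α : ℝ)
    (A B : H →L[ℂ] H)
    (Cp Cm : ℝ)
    (hp : (fun n : ℕ => lambdaPos A n - Cp * (n : ℝ) ^ (-α)) =o[atTop]
      fun n : ℕ => (n : ℝ) ^ (-α))
    (hm : (fun n : ℕ => lambdaPos (-A) n - Cm * (n : ℝ) ^ (-α)) =o[atTop]
      fun n : ℕ => (n : ℝ) ^ (-α))
    (hs : (fun n : ℕ => sVal B n) =o[atTop] fun n : ℕ => (n : ℝ) ^ (-α)) :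
    ((fun n : ℕ => lambdaPos (A + B) n - Cp * (n : ℝ) ^ (-α)) =o[atTop]
        fun n : ℕ => (n : ℝ) ^ (-α)) ∧
      ((fun n : ℕ => lambdaPos (-(A + B)) n - Cm * (n : ℝ) ^ (-α)) =o[atTop]
        fun n : ℕ => (n : ℝ) ^ (-α)) := by
  refine ⟨isLittleO_lambdaPos_add hp hs, ?_⟩
  rw [neg_add]
  exact isLittleO_lambdaPos_add hm (by simpa only [sVal_neg] using hs)

theorem eigenvalue_asymptotics_stability (α : ℝ) (hα : 0 < α)
    (A B : H →L[ℂ] H)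
    (hAc : IsCompactOperator A) (hBc : IsCompactOperator B)
    (hAsa : IsSelfAdjoint A) (hBsa : IsSelfAdjoint B)
    (Cp Cm : ℝ)
    (hp : (fun n : ℕ => lambdaPos A n - Cp * (n : ℝ) ^ (-α)) =o[atTop]
      fun n : ℕ => (n : ℝ) ^ (-α))
    (hm : (fun n : ℕ => lambdaPos (-A) n - Cm * (n : ℝ) ^ (-α)) =o[atTop]
      fun n : ℕ => (n : ℝ) ^ (-α))
    (hs : (fun n : ℕ => sVal B n) =o[atTop] fun n : ℕ => (n : ℝ) ^ (-α)) :
    ((fun n : ℕ => lambdaPos (A + B) n - Cp * (n : ℝ) ^ (-α)) =o[atTop]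
        fun n : ℕ => (n : ℝ) ^ (-α)) ∧
      ((fun n : ℕ => lambdaPos (-(A + B)) n - Cm * (n : ℝ) ^ (-α)) =o[atTop]
        fun n : ℕ => (n : ℝ) ^ (-α)) :=
  eigenvalue_asymptotics_stability_general α A B Cp Cm hp hm hs
end
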